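/- arXiv:math/0002182 — 3 statements merged into one kernel-verified Lean document; each statement's English description precedes it below -/
import Mathlib

section
/- Any point (1, L, M) with a = M - L - LM ≠ -1 and b = (L-M)·L·M satisfying b = (1/4)·a^3/(1+a) lies on the variety {Q(1,L,M) = 0}, and conversely if Q(1,L,M) = 0 and a ≠ -1 then b = (1/4)·a^3/(1+a). -/
/-- The sextic polynomial Q(K,L,M) from the Einstein-Dirac classification. -/
noncomputable def Q (K L M : ℝ) : ℝ :=
  -K^2*L*(L-M)^2*M + L^3*M^3 + K*L^2*M^2*(M-L) + K^3*(L-M)*(L+M)^2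

/-- With a = M - L - LM ≠ -1 and b = (L-M)LM, the point (1,L,M) lies on
{Q(1,L,M) = 0} if and only if b = (1/4)a³/(1+a). -/
theorem stmt_10 (L M : ℝ) (ha : M - L - L*M ≠ -1) :
    (L - M)*L*M = (1/4)*(M - L - L*M)^3/(1 + (M - L - L*M)) ↔
      Q 1 L M = 0 := by
  have h : 1 + (M - L - L*M) ≠ 0 := fun h => ha (by linarith)
  rw [Q, eq_div_iff h]
  constructor
  · intro hh; linear_combination 4 * hh
  · intro hh; linear_combination hh / 4
end

section
/- Consider the system 8λ²(SC - 2C²) - 4λS(2-C) - S²C = 0 and 8λ²(2S - 8) + 8λS(2-C) - 2S² = 0, where S = 2 + 2C. Its real solutions (C, λ) are exactly: (C,λ) = (2, 3/2), (2, -3/2), (-1, 0), ((−1+√5)/2, 1+√5/2), and ((−1−√5)/2, 1−√5/2). -/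
/-- The real solutions (C, λ) of the system
8λ²(SC - 2C²) - 4λS(2-C) - S²C = 0, 8λ²(2S - 8) + 8λS(2-C) - 2S² = 0
with S = 2 + 2C are exactly (2, ±3/2), (-1, 0), ((-1+√5)/2, 1+√5/2),
((-1-√5)/2, 1-√5/2). -/
theorem stmt_14 (C lam S : ℝ) (hS : S = 2 + 2*C) :
    (8*lam^2*(S*C - 2*C^2) - 4*lam*S*(2 - C) - S^2*C = 0 ∧
     8*lam^2*(2*S - 8) + 8*lam*S*(2 - C) - 2*S^2 = 0) ↔
    ((C = 2 ∧ lam = 3/2) ∨ (C = 2 ∧ lam = -3/2) ∨ (C = -1 ∧ lam = 0) ∨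
     (C = (-1 + Real.sqrt 5)/2 ∧ lam = 1 + Real.sqrt 5/2) ∨
     (C = (-1 - Real.sqrt 5)/2 ∧ lam = 1 - Real.sqrt 5/2)) := by
  subst hS
  have hs : Real.sqrt 5 ^ 2 = 5 := Real.sq_sqrt (by norm_num)
  have hs2 : Real.sqrt 5 > 2 := by
    nlinarith [Real.sqrt_nonneg 5, hs]
  set s := Real.sqrt 5 with hsdef
  constructor
  · rintro ⟨h1, h2⟩
    have key : 2*lam*(2-C)*(2*lam*C-(1+C)^2) = 0 := by
      linear_combination (1/4)*h1 - (C/8)*h2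
    have hsum : 4*lam^2*(2*C-1) - (1+C)^3 = 0 := by
      linear_combination (1/4)*h1 + (1/8)*h2
    rcases mul_eq_zero.mp key with h | key3
    · rcases mul_eq_zero.mp h with h | h
      · -- lam = 0
        have hl : lam = 0 := by linarith
        subst hl
        have h3 : (C+1)^2 = 0 := by linear_combination (-1/8)*h2
        have h4 : C + 1 = 0 := by
          exact pow_eq_zero_iff (by norm_num) |>.mp h3
        right; right; left
        constructor <;> linarith
      · -- C = 2
        have hC : C = 2 := by linarith
        subst hC
        have h3 : (lam - 3/2)*(lam + 3/2) = 0 := by linear_combination (1/32)*h2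
        rcases mul_eq_zero.mp h3 with h4 | h4
        · left; exact ⟨rfl, by linarith⟩
        · right; left; exact ⟨rfl, by linarith⟩
    · -- 2λC = (1+C)^2
      have hcc : (1+C)^3*(C^2+C-1) = 0 := by
        linear_combination (-(2*C-1)*(2*lam*C+(1+C)^2))*key3 + C^2*hsum
      rcases mul_eq_zero.mp hcc with h | hq
      · have h4 : 1 + C = 0 := by
          exact pow_eq_zero_iff (by norm_num) |>.mp h
        have hC : C = -1 := by linarith
        subst hC
        have hl : lam = 0 := by linear_combination (-1/2)*key3
        right; right; left; exact ⟨rfl, hl⟩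
      · have hfac : (C - (-1+s)/2)*(C - (-1-s)/2) = 0 := by
          linear_combination hq - (1/4)*hs
        rcases mul_eq_zero.mp hfac with h | h
        · have hC : C = (-1+s)/2 := by linarith
          subst hC
          have h5 : (lam - (1 + s/2))*(s-1) = 0 := by
            linear_combination key3 - (1/4)*hs
          have h6 : s - 1 ≠ 0 := by linarith
          have hl : lam = 1 + s/2 := by
            have := (mul_eq_zero.mp h5).resolve_right h6
            linarith
          right; right; right; left; exact ⟨rfl, hl⟩
        · have hC : C = (-1-s)/2 := by linarith
          subst hC
          have h5 : (lam - (1 - s/2))*(-s-1) = 0 := by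
            linear_combination key3 - (1/4)*hs
          have h6 : -s - 1 ≠ 0 := by linarith
          have hl : lam = 1 - s/2 := by
            have := (mul_eq_zero.mp h5).resolve_right h6
            linarith
          right; right; right; right; exact ⟨rfl, hl⟩
  · rintro (⟨hC, hl⟩ | ⟨hC, hl⟩ | ⟨hC, hl⟩ | ⟨hC, hl⟩ | ⟨hC, hl⟩) <;> subst hC <;> subst hl
    · constructor <;> norm_num
    · constructor <;> norm_num
    · constructor <;> norm_num
    · constructor
      · linear_combination ((5/2)*s + 7/2)*hs
      · linear_combination (2*s + 6)*hs
    · constructor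
      · linear_combination ((-5/2)*s + 7/2)*hs
      · linear_combination ((-2)*s + 6)*hs
end

section
/- Let L(M) for M near 0 be defined implicitly by Q(1, L, M) = 0 with L(0) = 0 (the branch with L(M) → 0 as M → 0). Then lim_{M→0} L(M)²/M = 0 and lim_{M→0} d/dM (L(M)²/M) = 1. -/
/-!
Writing `L = g M`, the equation `Q(1, L, M) = 0` becomes `M³ scaledQ g M = 0` with
`scaledQ g 0 = (g - 1)(g + 1)²`, so the slope `g = L/M` tends to `1` or `-1`. The value `-1` is
impossible: near `(g, M) = (-1, 0)` one has `scaledQ g M ≈ 4M - 2(g + 1)²`, which is negative for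
`M < 0`. Implicit differentiation, rescaled by `M²`, then gives `L' → 1`, and hence
`(L²/M)' = 2 (L/M) L' - (L/M)² → 1`.
-/

open Filter

open Topology

def scaledQ (g m : ℝ) : ℝ := g^3*(m-1)^2*(m+1) + g^2*(1+m)^2 - g*(1+m) - 1

/-- At `(K, L, M) = (1, g m, m)`, `∂Q/∂L = m² scaledQL g m` and `∂Q/∂M = m² scaledQM g m`. -/
def scaledQL (g m : ℝ) : ℝ := 3*g^2*(1 - m - m^2 + m^3) + 2*g*(1 + 2*m + m^2) - (1 + m)

def scaledQM (g m : ℝ) : ℝ := g^3*m*(-1 - 2*m + 3*m^2) + g^2*(1 + 4*m + 3*m^2) - g*(2 + 3*m) - 3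

theorem Q_one_mul_eq_pow_three_mul_scaledQ (g m : ℝ) : Q 1 (g * m) m = m^3 * scaledQ g m := by
  simp only [Q, scaledQ]; ring

theorem scaledQ_zero_right (g : ℝ) : scaledQ g 0 = (g - 1) * (g + 1)^2 := by
  simp only [scaledQ]; ring

theorem scaledQ_neg {g m : ℝ} (hg : |g + 1| < 1/2) (hm : -(1/10) < m) (hm0 : m < 0) :
    scaledQ g m < 0 := by
  obtain ⟨hg₁, hg₂⟩ := abs_lt.mp hg
  have hcubic : (g - 1) * (g + 1)^2 ≤ 0 := mul_nonpos_of_nonpos_of_nonneg (by linarith) (sq_nonneg _)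
  have hmg : 0 < m * g := mul_pos_of_neg_of_neg hm0 (by linarith)
  have hfactor : -(g - 1)^2 + m * g * (1 - g) + (m * g)^2 < 0 := by nlinarith
  have hsplit : scaledQ g m
      = (g - 1) * (g + 1)^2 + m * g * (-(g - 1)^2 + m * g * (1 - g) + (m * g)^2) := by
    simp only [scaledQ]; ring
  rw [hsplit]
  nlinarith [mul_neg_of_pos_of_neg hmg hfactor]

theorem Continuous.tendsto_comp₂ {α X Y Z : Type*} [TopologicalSpace X] [TopologicalSpace Y]
    [TopologicalSpace Z] {F : X → Y → Z} (hF : Continuous fun p : X × Y => F p.1 p.2)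
    {l : Filter α} {f : α → X} {g : α → Y} {a : X} {b : Y}
    (hf : Tendsto f l (𝓝 a)) (hg : Tendsto g l (𝓝 b)) :
    Tendsto (fun x => F (f x) (g x)) l (𝓝 (F a b)) :=
  (hF.tendsto (a, b)).comp (hf.prodMk_nhds hg)

theorem continuous_scaledQ : Continuous fun p : ℝ × ℝ => scaledQ p.1 p.2 := by
  unfold scaledQ; fun_prop

theorem continuous_scaledQL : Continuous fun p : ℝ × ℝ => scaledQL p.1 p.2 := by
  unfold scaledQL; fun_prop

theorem continuous_scaledQM : Continuous fun p : ℝ × ℝ => scaledQM p.1 p.2 := by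
  unfold scaledQM; fun_prop

theorem hasDerivAt_Q_one_comp {L : ℝ → ℝ} {L' x g : ℝ} (hL : HasDerivAt L L' x) (hg : L x = g * x) :
    HasDerivAt (fun y => Q 1 (L y) y) (x^2 * (scaledQL g x * L' + scaledQM g x)) x := by
  have hx := hasDerivAt_id' x
  have h := (((hL.fun_mul ((hL.fun_sub hx).fun_pow 2)).fun_mul hx).fun_neg.fun_add
    ((hL.fun_pow 3).fun_mul (hx.fun_pow 3))).fun_add ((((hL.fun_pow 2).fun_mul (hx.fun_pow 2)).fun_mul
    (hx.fun_sub hL)).fun_add ((hL.fun_sub hx).fun_mul ((hL.fun_add hx).fun_pow 2)))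
  have hQ : (fun y => Q 1 (L y) y) = fun y => -(L y * (L y - y)^2 * y) + L y^3 * y^3
      + (L y^2 * y^2 * (y - L y) + (L y - y) * (L y + y)^2) := by
    funext y; simp only [Q]; ring
  rw [hQ]
  refine h.congr_deriv ?_
  rw [hg]; simp only [scaledQL, scaledQM]; push_cast; ring

theorem scaledQL_mul_add_scaledQM_eq_zero {L : ℝ → ℝ} {L' x g : ℝ} (hL : HasDerivAt L L' x)
    (hQ : ∀ᶠ y in 𝓝 x, Q 1 (L y) y = 0) (hx : x ≠ 0) (hg : L x = g * x) :
    scaledQL g x * L' + scaledQM g x = 0 := by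
  have hzero : HasDerivAt (fun y => Q 1 (L y) y) 0 x :=
    (hasDerivAt_const x (0 : ℝ)).congr_of_eventuallyEq hQ
  have := (hasDerivAt_Q_one_comp hL hg).unique hzero
  simpa [hx] using this

theorem hasDerivAt_sq_div_self {f : ℝ → ℝ} {f' x : ℝ} (hf : HasDerivAt f f' x) (hx : x ≠ 0) :
    HasDerivAt (fun y => f y ^ 2 / y) (2 * (f x / x) * f' - (f x / x)^2) x := by
  refine ((hf.fun_pow 2).div (hasDerivAt_id' x) hx).congr_deriv ?_
  field_simp
  ring

section Branch

variable {L : ℝ → ℝ} {c : ℝ}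

theorem eventually_scaledQ_slope_eq_zero (heq : ∀ᶠ M in 𝓝 0, Q 1 (L M) M = 0) :
    ∀ᶠ M in 𝓝[≠] 0, scaledQ (L M / M) M = 0 := by
  filter_upwards [heq.filter_mono nhdsWithin_le_nhds, self_mem_nhdsWithin] with M hQ hM
  have hM : M ≠ 0 := hM
  have hfac := Q_one_mul_eq_pow_three_mul_scaledQ (L M / M) M
  rw [div_mul_cancel₀ _ hM, hQ] at hfac
  exact (mul_eq_zero.mp hfac.symm).resolve_left (pow_ne_zero 3 hM)

theorem slope_limit_eq_one (heq : ∀ᶠ M in 𝓝 0, Q 1 (L M) M = 0)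
    (hc : Tendsto (fun M => L M / M) (𝓝[≠] 0) (𝓝 c)) : c = 1 := by
  have hP := eventually_scaledQ_slope_eq_zero heq
  have hlim : Tendsto (fun M => scaledQ (L M / M) M) (𝓝[≠] 0) (𝓝 (scaledQ c 0)) :=
    continuous_scaledQ.tendsto_comp₂ hc (tendsto_nhdsWithin_of_tendsto_nhds tendsto_id)
  have hc0 : (c - 1) * (c + 1)^2 = 0 := by
    rw [← scaledQ_zero_right]
    exact tendsto_nhds_unique hlim (tendsto_const_nhds.congr' (hP.mono fun _ h => h.symm))
  rcases mul_eq_zero.mp hc0 with h | h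
  · linarith
  · have hc : c = -1 := by linarith [pow_eq_zero_iff (n := 2) two_ne_zero |>.mp h]
    subst hc
    have hleft : 𝓝[<] (0 : ℝ) ≤ 𝓝[≠] 0 := nhdsWithin_mono _ fun x hx => ne_of_lt hx
    have hnear : ∀ᶠ M in 𝓝[<] 0, |L M / M + 1| < 1/2 := by
      have := (hc.mono_left hleft).eventually (Metric.ball_mem_nhds (-1 : ℝ) one_half_pos)
      simpa only [Metric.mem_ball, Real.dist_eq, sub_neg_eq_add] using this
    have hcontra : ∀ᶠ M : ℝ in 𝓝[<] 0, False := by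
      filter_upwards [hP.filter_mono hleft, hnear, Ioo_mem_nhdsLT (by norm_num : -(1/10 : ℝ) < 0)]
        with M hPM hgM hM
      exact (scaledQ_neg hgM hM.1 hM.2).ne hPM
    exact hcontra.exists.elim fun _ => False.elim

theorem tendsto_deriv_of_slope_tendsto_one (hdiff : ∀ᶠ M in 𝓝 0, DifferentiableAt ℝ L M)
    (heq : ∀ᶠ M in 𝓝 0, Q 1 (L M) M = 0) (hc : Tendsto (fun M => L M / M) (𝓝[≠] 0) (𝓝 1)) :
    Tendsto (deriv L) (𝓝[≠] 0) (𝓝 1) := by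
  have hM : Tendsto (fun M : ℝ => M) (𝓝[≠] 0) (𝓝 0) := tendsto_nhdsWithin_of_tendsto_nhds tendsto_id
  have hQL : Tendsto (fun M => scaledQL (L M / M) M) (𝓝[≠] 0) (𝓝 4) := by
    have h1 : scaledQL 1 0 = 4 := by norm_num [scaledQL]
    rw [← h1]
    exact continuous_scaledQL.tendsto_comp₂ hc hM
  have hQM : Tendsto (fun M => scaledQM (L M / M) M) (𝓝[≠] 0) (𝓝 (-4)) := by
    have h1 : scaledQM 1 0 = (-4) := by norm_num [scaledQM]
    rw [← h1]
    exact continuous_scaledQM.tendsto_comp₂ hc hM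
  have hquot : Tendsto (fun M => -scaledQM (L M / M) M / scaledQL (L M / M) M) (𝓝[≠] 0)
      (𝓝 (-(-4) / 4)) :=
    hQM.neg.div hQL four_ne_zero
  rw [show (1 : ℝ) = -(-4) / 4 by norm_num]
  refine hquot.congr' ?_
  filter_upwards [hdiff.filter_mono nhdsWithin_le_nhds, heq.eventually_nhds.filter_mono nhdsWithin_le_nhds,
    self_mem_nhdsWithin, hQL.eventually_ne (by norm_num : (4 : ℝ) ≠ 0)] with M hdM hQ hM0 hQL0
  have hM0 : M ≠ 0 := hM0
  have := scaledQL_mul_add_scaledQM_eq_zero hdM.hasDerivAt hQ hM0 (div_mul_cancel₀ _ hM0).symm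
  field_simp
  linarith

end Branch

theorem stmt_15_general (L : ℝ → ℝ)
    (hdiff : ∀ᶠ M in nhds (0 : ℝ), DifferentiableAt ℝ L M)
    (heq : ∀ᶠ M in nhds (0 : ℝ), Q 1 (L M) M = 0)
    (hfin : ∃ c : ℝ, Tendsto (fun M => L M / M) (nhdsWithin 0 {(0:ℝ)}ᶜ) (nhds c)) :
    Tendsto (fun M => (L M)^2 / M) (nhdsWithin 0 {(0:ℝ)}ᶜ) (nhds 0) ∧
    Tendsto (deriv fun M => (L M)^2 / M) (nhdsWithin 0 {(0:ℝ)}ᶜ) (nhds 1) := by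
  obtain ⟨c, hc⟩ := hfin
  obtain rfl := slope_limit_eq_one heq hc
  have hL' := tendsto_deriv_of_slope_tendsto_one hdiff heq hc
  have hM : Tendsto (fun M : ℝ => M) (𝓝[≠] 0) (𝓝 0) := tendsto_nhdsWithin_of_tendsto_nhds tendsto_id
  constructor
  · have hlim : Tendsto (fun M => (L M / M)^2 * M) (𝓝[≠] 0) (𝓝 (1^2 * 0)) := (hc.pow 2).mul hM
    rw [one_pow, mul_zero] at hlim
    refine hlim.congr' ?_
    filter_upwards [self_mem_nhdsWithin] with M hM0
    field_simp [show M ≠ 0 from hM0]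
  · have hlim : Tendsto (fun M => 2 * (L M / M) * deriv L M - (L M / M)^2) (𝓝[≠] 0)
        (𝓝 (2 * 1 * 1 - 1^2)) :=
      ((hc.const_mul 2).mul hL').sub (hc.pow 2)
    norm_num at hlim
    refine hlim.congr' ?_
    filter_upwards [self_mem_nhdsWithin, hdiff.filter_mono nhdsWithin_le_nhds] with M hM0 hdM
    exact (hasDerivAt_sq_div_self hdM.hasDerivAt hM0).deriv.symm

/-- For a differentiable branch L(M) of Q(1,L,M) = 0 near M = 0 with L(0) = 0
and L(M)/M tending to a finite limit, the function Ψ = L²/M satisfies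
lim_{M→0} L(M)²/M = 0 and lim_{M→0} d/dM (L(M)²/M) = 1. -/
theorem stmt_15 (L : ℝ → ℝ)
    (hdiff : ∀ᶠ M in nhds (0 : ℝ), DifferentiableAt ℝ L M)
    (heq : ∀ᶠ M in nhds (0 : ℝ), Q 1 (L M) M = 0)
    (h0 : L 0 = 0)
    (hfin : ∃ c : ℝ, Tendsto (fun M => L M / M) (nhdsWithin 0 {(0:ℝ)}ᶜ) (nhds c)) :
    Tendsto (fun M => (L M)^2 / M) (nhdsWithin 0 {(0:ℝ)}ᶜ) (nhds 0) ∧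
    Tendsto (deriv fun M => (L M)^2 / M) (nhdsWithin 0 {(0:ℝ)}ᶜ) (nhds 1) :=
  stmt_15_general L hdiff heq hfin
end
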